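/- Let γ > 1/2. Then sup over all n ∈ ℤ and τ ∈ ℝ of the sum Σ_{n₁ ∈ ℤ} 1 / (1 + |τ + n₁(n − n₁)|)^γ is finite. -/
import Mathlib


open scoped ENNReal

/-- Antitonicity of `b ↦ 1 / (1 + b) ^ γ`. -/
lemma aux_anti {γ a b : ℝ} (hγ : 0 ≤ γ) (ha : 0 ≤ a) (hab : a ≤ b) :
    1 / (1 + b) ^ γ ≤ 1 / (1 + a) ^ γ := by
  have h1 : (0:ℝ) < 1 + a := by linarith
  have h2 : (1 + a) ^ γ ≤ (1 + b) ^ γ :=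
    Real.rpow_le_rpow h1.le (by linarith) hγ
  exact one_div_le_one_div_of_le (Real.rpow_pos_of_pos h1 γ) h2

/-- The dominating function. -/
noncomputable def Dfun (γ : ℝ) (l : ℤ) : ℝ :=
  1 / (1 + (max (|(l:ℝ)| - 1) 0) ^ 2) ^ γ

lemma Dfun_nonneg (γ : ℝ) (l : ℤ) : 0 ≤ Dfun γ l := by
  unfold Dfun
  positivity

/-- The dominating constant. -/
noncomputable def Cconst (γ : ℝ) : ℝ≥0∞ := ∑' l : ℤ, ENNReal.ofReal (Dfun γ l)

lemma Cconst_lt_top {γ : ℝ} (hγ : 1 / 2 < γ) : Cconst γ < ⊤ := by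
  have hγ0 : (0:ℝ) < γ := by linarith
  have hs : Summable (fun l : ℤ => (16:ℝ) ^ γ * (1 / |(l:ℝ) + 1/2| ^ (2*γ))) := by
    refine Summable.mul_left _ ?_
    exact (Real.summable_one_div_int_add_rpow (1/2) (2*γ)).mpr (by linarith)
  have hle : ∀ l : ℤ, Dfun γ l ≤ (16:ℝ) ^ γ * (1 / |(l:ℝ) + 1/2| ^ (2*γ)) := by
    intro l
    set x : ℝ := |(l:ℝ) + 1/2| with hx
    have hx0 : 0 < x := by
      have : ((l:ℝ) + 1/2) ≠ 0 := by
        intro h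
        have : (2*l : ℝ) = -1 := by linarith
        have : ((2*l : ℤ) : ℝ) = ((-1 : ℤ) : ℝ) := by push_cast; linarith
        have := Int.cast_injective this
        omega
      simpa [hx] using abs_pos.mpr this
    have key : x ^ 2 / 16 ≤ 1 + (max (|(l:ℝ)| - 1) 0) ^ 2 := by
      have hxle : x ≤ |(l:ℝ)| + 1/2 := (abs_add_le _ _).trans (by rw [abs_of_nonneg (by norm_num : (0:ℝ) ≤ 1/2)])
      rcases le_or_gt (|(l:ℝ)|) 1 with h | h
      · nlinarith [abs_nonneg ((l:ℝ)), le_max_right (|(l:ℝ)| - 1) (0:ℝ),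
          sq_nonneg (max (|(l:ℝ)| - 1) 0)]
      · have habs : (2:ℝ) ≤ |(l:ℝ)| := by
          have h4 : (1:ℤ) < |l| := by
            rw [← Int.cast_abs] at h; exact_mod_cast h
          have h5 : (2:ℤ) ≤ |l| := by omega
          rw [← Int.cast_abs]; exact_mod_cast h5
        have hmax : max (|(l:ℝ)| - 1) 0 = |(l:ℝ)| - 1 := max_eq_left (by linarith)
        rw [hmax]
        nlinarith [sq_nonneg (|(l:ℝ)| - 2)]
    -- from key : x^2/16 ≤ 1 + max^2, deduce the bound
    have hkey2 : (x ^ 2 / 16) ^ γ ≤ (1 + (max (|(l:ℝ)| - 1) 0) ^ 2) ^ γ :=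
      Real.rpow_le_rpow (by positivity) key hγ0.le
    have hpos : (0:ℝ) < (x ^ 2 / 16) ^ γ := Real.rpow_pos_of_pos (by positivity) γ
    have h1 : Dfun γ l ≤ 1 / (x ^ 2 / 16) ^ γ :=
      one_div_le_one_div_of_le hpos hkey2
    have heq : (x ^ 2 / 16) ^ γ = x ^ (2*γ) / (16:ℝ) ^ γ := by
      rw [Real.div_rpow (by positivity) (by norm_num)]
      congr 1
      rw [← Real.rpow_natCast x 2, ← Real.rpow_mul hx0.le]
      norm_num
    rw [heq] at h1
    calc Dfun γ l ≤ 1 / (x ^ (2*γ) / (16:ℝ) ^ γ) := h1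
      _ = (16:ℝ) ^ γ * (1 / x ^ (2*γ)) := by
          rw [one_div_div]; ring
  have hnn : ∀ l : ℤ, 0 ≤ Dfun γ l := Dfun_nonneg γ
  have hDsum : Summable (Dfun γ) := Summable.of_nonneg_of_le hnn hle hs
  have : Cconst γ = ENNReal.ofReal (∑' l : ℤ, Dfun γ l) := by
    rw [ENNReal.ofReal_tsum_of_nonneg hnn hDsum]; rfl
  rw [this]
  exact ENNReal.ofReal_lt_top

/-- Uniform-in-shift bound. -/
lemma shift_bound {γ : ℝ} (hγ : 1 / 2 < γ) (u : ℝ) :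
    (∑' k : ℤ, ENNReal.ofReal (1 / (1 + ((k:ℝ) - u) ^ 2) ^ γ)) ≤ Cconst γ := by
  have hγ0 : (0:ℝ) ≤ γ := by linarith
  set j : ℤ := ⌊u⌋ with hj
  set t : ℝ := u - j with ht
  have ht0 : 0 ≤ t := by
    have := Int.floor_le u; simp [ht]; linarith
  have ht1 : t < 1 := by
    have := Int.lt_floor_add_one u; simp [ht]; linarith
  have hre : (∑' k : ℤ, ENNReal.ofReal (1 / (1 + ((k:ℝ) - u) ^ 2) ^ γ))
      = ∑' l : ℤ, ENNReal.ofReal (1 / (1 + (((l + j : ℤ):ℝ) - u) ^ 2) ^ γ) :=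
    ((Equiv.addRight j).tsum_eq
      (fun k : ℤ => ENNReal.ofReal (1 / (1 + ((k:ℝ) - u) ^ 2) ^ γ))).symm
  rw [hre]
  refine ENNReal.tsum_le_tsum fun l => ?_
  refine ENNReal.ofReal_le_ofReal ?_
  have harg : ((l + j : ℤ):ℝ) - u = (l:ℝ) - t := by push_cast; ring
  rw [harg]
  refine aux_anti hγ0 (by positivity) ?_
  -- (max (|l| - 1) 0)^2 ≤ (l - t)^2
  rcases le_or_gt 1 l with h | h
  · have hl1 : (1:ℝ) ≤ (l:ℝ) := by exact_mod_cast h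
    have habs : |(l:ℝ)| = (l:ℝ) := abs_of_pos (by linarith)
    have hmax : max (|(l:ℝ)| - 1) 0 = (l:ℝ) - 1 := by
      rw [habs]; exact max_eq_left (by linarith)
    rw [hmax]
    nlinarith
  · have hl0 : (l:ℝ) ≤ 0 := by
      have : l ≤ 0 := by omega
      exact_mod_cast this
    have h1 : max (|(l:ℝ)| - 1) 0 ≤ |(l:ℝ)| := by
      apply max_le (by linarith) (abs_nonneg _)
    have h2 : (max (|(l:ℝ)| - 1) 0) ^ 2 ≤ (l:ℝ) ^ 2 := by
      have := sq_abs ((l:ℝ))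
      nlinarith [le_max_right (|(l:ℝ)| - 1) (0:ℝ)]
    nlinarith

/-- For `γ > 1/2`, `sup_{n ∈ ℤ, τ ∈ ℝ} Σ_{n₁ ∈ ℤ} 1 / (1 + |τ + n₁(n - n₁)|)^γ < ∞`. -/
theorem stmt_1 (γ : ℝ) (hγ : 1 / 2 < γ) :
    (⨆ (n : ℤ) (τ : ℝ), ∑' n₁ : ℤ,
      ENNReal.ofReal (1 / (1 + |τ + ((n₁ * (n - n₁) : ℤ) : ℝ)|) ^ γ)) < ⊤ := by
  have hγ0 : (0:ℝ) ≤ γ := by linarith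
  have hC := Cconst_lt_top hγ
  have key : ∀ (n : ℤ) (τ : ℝ), (∑' n₁ : ℤ,
      ENNReal.ofReal (1 / (1 + |τ + ((n₁ * (n - n₁) : ℤ) : ℝ)|) ^ γ))
      ≤ Cconst γ + Cconst γ := by
    intro n τ
    set A : ℝ := τ + (n:ℝ)^2/4 with hA
    set s : ℝ := Real.sqrt (max A 0) with hs
    have hs0 : 0 ≤ s := Real.sqrt_nonneg _
    have hbound : ∀ n₁ : ℤ,
        ENNReal.ofReal (1 / (1 + |τ + ((n₁ * (n - n₁) : ℤ) : ℝ)|) ^ γ)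
        ≤ ENNReal.ofReal (1 / (1 + ((n₁:ℝ) - ((n:ℝ)/2 + s)) ^ 2) ^ γ)
          + ENNReal.ofReal (1 / (1 + ((n₁:ℝ) - ((n:ℝ)/2 - s)) ^ 2) ^ γ) := by
      intro n₁
      set x : ℝ := (n₁:ℝ) - (n:ℝ)/2 with hxdef
      have harg : τ + ((n₁ * (n - n₁) : ℤ) : ℝ) = A - x ^ 2 := by
        push_cast; ring
      have hsq : (|x| - s) ^ 2 ≤ |A - x ^ 2| := by
        rcases le_or_gt A 0 with hA0 | hA0
        · have hsz : s = 0 := by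
            rw [hs, max_eq_right hA0, Real.sqrt_zero]
          rw [hsz]
          have : A - x ^ 2 ≤ 0 := by nlinarith
          rw [abs_of_nonpos this]
          have := sq_abs x
          nlinarith
        · have hss : s ^ 2 = A := by
            rw [hs, max_eq_left hA0.le, Real.sq_sqrt hA0.le]
          have hfac : A - x ^ 2 = (s - |x|) * (s + |x|) := by
            have := sq_abs x
            nlinarith
          rw [hfac, abs_mul]
          have h2 : abs (s + |x|) = s + |x| := abs_of_nonneg (by positivity)
          have h3 : abs (|x| - s) ≤ s + |x| := by
            rcases abs_cases (|x| - s) with ⟨h, _⟩ | ⟨h, _⟩ <;> nlinarith [abs_nonneg x]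
          have h4 : abs (s - |x|) = abs (|x| - s) := abs_sub_comm s (|x|)
          rw [h2, h4]
          have h5 : (|x| - s)^2 = abs (|x| - s) * abs (|x| - s) := by
            rw [← sq_abs, sq]
          rw [h5]
          exact mul_le_mul_of_nonneg_left h3 (abs_nonneg _)
      -- (|x| - s)^2 equals (x - s)^2 or (x + s)^2
      have hmain : 1 / (1 + |τ + ((n₁ * (n - n₁) : ℤ) : ℝ)|) ^ γ
          ≤ 1 / (1 + (x - s) ^ 2) ^ γ ∨
          1 / (1 + |τ + ((n₁ * (n - n₁) : ℤ) : ℝ)|) ^ γ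
          ≤ 1 / (1 + (x + s) ^ 2) ^ γ := by
        rcases le_or_gt 0 x with hx | hx
        · left
          rw [harg]
          refine aux_anti hγ0 (by positivity) ?_
          have : |x| = x := abs_of_nonneg hx
          rw [this] at hsq; exact hsq
        · right
          rw [harg]
          refine aux_anti hγ0 (by positivity) ?_
          have : |x| = -x := abs_of_neg hx
          rw [this] at hsq
          have : (-x - s)^2 = (x + s)^2 := by ring
          rw [this] at hsq; exact hsq
      have hx1 : (n₁:ℝ) - ((n:ℝ)/2 + s) = x - s := by rw [hxdef]; ring
      have hx2 : (n₁:ℝ) - ((n:ℝ)/2 - s) = x + s := by rw [hxdef]; ring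
      rw [hx1, hx2]
      rcases hmain with h | h
      · exact le_add_right (ENNReal.ofReal_le_ofReal h)
      · exact le_add_left (ENNReal.ofReal_le_ofReal h)
    calc (∑' n₁ : ℤ, ENNReal.ofReal (1 / (1 + |τ + ((n₁ * (n - n₁) : ℤ) : ℝ)|) ^ γ))
        ≤ ∑' n₁ : ℤ, (ENNReal.ofReal (1 / (1 + ((n₁:ℝ) - ((n:ℝ)/2 + s)) ^ 2) ^ γ)
          + ENNReal.ofReal (1 / (1 + ((n₁:ℝ) - ((n:ℝ)/2 - s)) ^ 2) ^ γ)) :=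
          ENNReal.tsum_le_tsum hbound
      _ = (∑' n₁ : ℤ, ENNReal.ofReal (1 / (1 + ((n₁:ℝ) - ((n:ℝ)/2 + s)) ^ 2) ^ γ))
          + ∑' n₁ : ℤ, ENNReal.ofReal (1 / (1 + ((n₁:ℝ) - ((n:ℝ)/2 - s)) ^ 2) ^ γ) :=
          ENNReal.tsum_add
      _ ≤ Cconst γ + Cconst γ :=
          add_le_add (shift_bound hγ _) (shift_bound hγ _)
  refine lt_of_le_of_lt ?_ (show Cconst γ + Cconst γ < ⊤ from
    ENNReal.add_lt_top.mpr ⟨hC, hC⟩)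
  exact iSup_le fun n => iSup_le fun τ => key n τ
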